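/- Let a > b > 0. For the simple billiard 4-periodic family in the ellipse x²/a² + y²/b² = 1, the product of the area A of the 4-periodic and the area A' of its outer polygon (the tangential polygon whose sides touch the ellipse at the four vertices) is constant and equals 8a²b². In particular, with P₁ = (x₁, y₁) on the ellipse and vertices as in the standard parametrization, A·A' = 8a²b² independent of P₁. -/

import Mathlib

/-!
Both quadrilaterals have area half the cross product of their diagonals. Pairing points with
`B(p, q) = q₁p₁/a² + q₂p₂/b²`, the tangent line at `p` is the polar line `B(p, ·) = 1`, and
the two-dimensional Cauchy–Binet identity gives
`cross(q, q') · cross(p, p') = a²b² (B(p, q) B(p', q') - B(p', q) B(p, q'))`.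
Applied to the diagonals of the outer polygon and to `P₁, P₂`, each pairing is `±2` by the
tangency conditions and the central symmetry `P₃ = -P₁`, `P₄ = -P₂`, so the product of the two
cross products is `8a²b²`.
-/

/-- Unsigned shoelace area of a quadrilateral. -/
noncomputable def quadArea (P1 P2 P3 P4 : ℝ × ℝ) : ℝ :=
  |(P1.1*(P2.2 - P4.2) + P2.1*(P3.2 - P1.2) + P3.1*(P4.2 - P2.2)
      + P4.1*(P1.2 - P3.2))| / 2

/-- `q` lies on the tangent line to the ellipse `x²/a² + y²/b² = 1` at the point
`p` of the ellipse. -/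
def OnTangentLine (a b : ℝ) (p q : ℝ × ℝ) : Prop :=
  q.1 * p.1 / a^2 + q.2 * p.2 / b^2 = 1

def cross (u v : ℝ × ℝ) : ℝ := u.1 * v.2 - u.2 * v.1

theorem quadArea_eq_abs_cross_diagonals (P1 P2 P3 P4 : ℝ × ℝ) :
    quadArea P1 P2 P3 P4 = |cross (P1 - P3) (P2 - P4)| / 2 := by
  simp only [quadArea, cross, Prod.fst_sub, Prod.snd_sub]
  ring_nf

theorem quadArea_neg (P Q : ℝ × ℝ) : quadArea P Q (-P) (-Q) = 2 * |cross P Q| := by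
  have h : cross (P - -P) (Q - -Q) = 4 * cross P Q := by
    simp only [cross, Prod.fst_sub, Prod.snd_sub, Prod.fst_neg, Prod.snd_neg]
    ring
  rw [quadArea_eq_abs_cross_diagonals, h, abs_mul, abs_of_pos four_pos]
  ring

noncomputable def ellipsePairing (a b : ℝ) (p q : ℝ × ℝ) : ℝ :=
  q.1 * p.1 / a^2 + q.2 * p.2 / b^2

theorem onTangentLine_iff {a b : ℝ} {p q : ℝ × ℝ} :
    OnTangentLine a b p q ↔ ellipsePairing a b p q = 1 :=
  Iff.rfl

theorem ellipsePairing_neg_left (a b : ℝ) (p q : ℝ × ℝ) :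
    ellipsePairing a b (-p) q = -ellipsePairing a b p q := by
  simp only [ellipsePairing, Prod.fst_neg, Prod.snd_neg]
  ring

theorem ellipsePairing_sub_right (a b : ℝ) (p q q' : ℝ × ℝ) :
    ellipsePairing a b p (q - q') = ellipsePairing a b p q - ellipsePairing a b p q' := by
  simp only [ellipsePairing, Prod.fst_sub, Prod.snd_sub]
  ring

theorem cross_mul_cross_eq {a b : ℝ} (ha : a ≠ 0) (hb : b ≠ 0) (p p' q q' : ℝ × ℝ) :
    cross q q' * cross p p' = a^2 * b^2 *
      (ellipsePairing a b p q * ellipsePairing a b p' q'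
        - ellipsePairing a b p' q * ellipsePairing a b p q') := by
  simp only [cross, ellipsePairing]
  field_simp
  ring

theorem cross_diagonals_mul_cross_eq {a b : ℝ} (ha : a ≠ 0) (hb : b ≠ 0)
    {P Q Q1 Q2 Q3 Q4 : ℝ × ℝ}
    (h11 : OnTangentLine a b P Q1) (h21 : OnTangentLine a b Q Q1)
    (h22 : OnTangentLine a b Q Q2) (h32 : OnTangentLine a b (-P) Q2)
    (h33 : OnTangentLine a b (-P) Q3) (h43 : OnTangentLine a b (-Q) Q3)
    (h44 : OnTangentLine a b (-Q) Q4) (h14 : OnTangentLine a b P Q4) :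
    cross (Q1 - Q3) (Q2 - Q4) * cross P Q = 8 * a^2 * b^2 := by
  rw [onTangentLine_iff] at h11 h21 h22 h14
  rw [onTangentLine_iff, ellipsePairing_neg_left, neg_eq_iff_eq_neg] at h32 h33 h43 h44
  rw [cross_mul_cross_eq ha hb]
  simp only [ellipsePairing_sub_right, h11, h21, h22, h14, h32, h33, h43, h44]
  ring

theorem quadArea_mul_quadArea_tangential {a b : ℝ} (ha : a ≠ 0) (hb : b ≠ 0)
    {P Q Q1 Q2 Q3 Q4 : ℝ × ℝ}
    (h11 : OnTangentLine a b P Q1) (h21 : OnTangentLine a b Q Q1)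
    (h22 : OnTangentLine a b Q Q2) (h32 : OnTangentLine a b (-P) Q2)
    (h33 : OnTangentLine a b (-P) Q3) (h43 : OnTangentLine a b (-Q) Q3)
    (h44 : OnTangentLine a b (-Q) Q4) (h14 : OnTangentLine a b P Q4) :
    quadArea P Q (-P) (-Q) * quadArea Q1 Q2 Q3 Q4 = 8 * a^2 * b^2 := by
  have key := cross_diagonals_mul_cross_eq ha hb h11 h21 h22 h32 h33 h43 h44 h14
  calc quadArea P Q (-P) (-Q) * quadArea Q1 Q2 Q3 Q4
      = |cross (Q1 - Q3) (Q2 - Q4) * cross P Q| := by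
        rw [quadArea_neg, quadArea_eq_abs_cross_diagonals, abs_mul]
        ring
    _ = 8 * a^2 * b^2 := by rw [key, abs_of_nonneg (by positivity)]

theorem simple_4periodic_area_product_general (a b x₁ y₁ : ℝ) (hab : a > b) (hb : b > 0)
    (Q1 Q2 Q3 Q4 : ℝ × ℝ) :
    let q := Real.sqrt (b^6*x₁^2 + a^6*y₁^2)
    let P1 : ℝ × ℝ := (x₁, y₁)
    let P2 : ℝ × ℝ := (-(a^4*y₁)/q, (b^4*x₁)/q)
    let P3 : ℝ × ℝ := (-x₁, -y₁)
    let P4 : ℝ × ℝ := ((a^4*y₁)/q, -(b^4*x₁)/q)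
    -- each outer vertex is the intersection of consecutive tangent lines
    OnTangentLine a b P1 Q1 → OnTangentLine a b P2 Q1 →
    OnTangentLine a b P2 Q2 → OnTangentLine a b P3 Q2 →
    OnTangentLine a b P3 Q3 → OnTangentLine a b P4 Q3 →
    OnTangentLine a b P4 Q4 → OnTangentLine a b P1 Q4 →
    quadArea P1 P2 P3 P4 * quadArea Q1 Q2 Q3 Q4 = 8*a^2*b^2 := by
  intro q P1 P2 P3 P4 h11 h21 h22 h32 h33 h43 h44 h14
  have hP3 : P3 = -P1 := rfl
  have hP4 : P4 = -P2 := by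
    simp only [P2, P4, Prod.neg_mk, neg_div, neg_neg]
  rw [hP3] at h32 h33
  rw [hP4] at h43 h44
  rw [hP3, hP4]
  exact quadArea_mul_quadArea_tangential (hb.trans hab).ne' hb.ne' h11 h21 h22 h32 h33 h43 h44 h14

/-- For simple billiard 4-periodics, the product of the area `A` of the
4-periodic and the area `A'` of its outer (tangential) polygon is the constant
`8a²b²`, independent of the initial vertex. -/
theorem simple_4periodic_area_product (a b x₁ y₁ : ℝ) (hab : a > b) (hb : b > 0)
    (hP1 : (x₁/a)^2 + (y₁/b)^2 = 1) (Q1 Q2 Q3 Q4 : ℝ × ℝ) :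
    let q := Real.sqrt (b^6*x₁^2 + a^6*y₁^2)
    let P1 : ℝ × ℝ := (x₁, y₁)
    let P2 : ℝ × ℝ := (-(a^4*y₁)/q, (b^4*x₁)/q)
    let P3 : ℝ × ℝ := (-x₁, -y₁)
    let P4 : ℝ × ℝ := ((a^4*y₁)/q, -(b^4*x₁)/q)
    -- each outer vertex is the intersection of consecutive tangent lines
    OnTangentLine a b P1 Q1 → OnTangentLine a b P2 Q1 →
    OnTangentLine a b P2 Q2 → OnTangentLine a b P3 Q2 →
    OnTangentLine a b P3 Q3 → OnTangentLine a b P4 Q3 →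
    OnTangentLine a b P4 Q4 → OnTangentLine a b P1 Q4 →
    quadArea P1 P2 P3 P4 * quadArea Q1 Q2 Q3 Q4 = 8*a^2*b^2 :=
  simple_4periodic_area_product_general a b x₁ y₁ hab hb Q1 Q2 Q3 Q4
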